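/- arXiv:2401.05835 — 2 statements merged into one kernel-verified Lean document; each statement's English description precedes it below -/
import Mathlib

section
/- Let A ∈ ℝ^{n×n}, B ∈ ℝ^{n×m}, and let symmetric matrices ΔP, ΔQ be given by ΔP = X and ΔQ = X − AᵀXA for some symmetric X with XB = 0. With 𝒬̂ := bdiag(Q̂+ΔQ, …, Q̂+ΔQ, P̂+ΔP) replacing 𝒬 := bdiag(Q̂,…,Q̂,P̂) (N−1 copies of the Q-block), and with 𝒮 the block lower-triangular matrix whose (i,j) block is A^{i−j}B for i ≥ j (zero otherwise) and 𝒯 := col(A, A², …, A^N), suppose 𝒯ᵀΔ𝒬𝒮 = 0 where Δ𝒬 := bdiag(ΔQ,…,ΔQ,ΔP). Then also 𝒮ᵀΔ𝒬𝒮 = 0. -/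
/-!
Block `(j, l)` of `𝒮ᵀ Δ𝒬 𝒮` is `∑ᵢ Sᵢⱼᵀ Dᵢ Sᵢₗ` with `Sᵢⱼ = Aⁱ⁻ʲB` for `j ≤ i` and `0` otherwise.
Each column of blocks follows the recursion `Sᵢ₊₁,ⱼ = A Sᵢⱼ` up to a correction `B` at `i + 1 = j`,
which `X` annihilates on both sides. Hence `Sᵢⱼᵀ (X - AᵀXA) Sᵢₗ = Fᵢ - Fᵢ₊₁` with
`Fᵢ = Sᵢⱼᵀ X Sᵢₗ`, the sum telescopes against the terminal block `ΔP = X` to `F₀`, and `F₀ = 0`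
because `X S₀ₗ = 0`.
-/

open Matrix Finset

namespace Matrix

variable {I J J' K L L' R : Type*}

theorem comp_mul_comp [Fintype J] [Fintype L] [NonUnitalNonAssocSemiring R]
    (M : Matrix I J (Matrix K L R)) (M' : Matrix J J' (Matrix L L' R)) :
    comp I J K L R M * comp J J' L L' R M' =
      comp I J' K L' R (of fun i j' => ∑ j, M i j * M' j j') := by
  ext ⟨i, k⟩ ⟨j', l'⟩
  simp only [mul_apply, Fintype.sum_prod_type, comp_apply, of_apply, sum_apply]

theorem comp_transpose_mul_comp_diagonal_mul_comp [Fintype I] [Fintype K] [DecidableEq I]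
    [NonUnitalNonAssocSemiring R] (S : Matrix I J (Matrix K L R))
    (S' : Matrix I J' (Matrix K L' R)) (D : I → Matrix K K R) :
    (comp I J K L R S)ᵀ * comp I I K K R (diagonal D) * comp I J' K L' R S' =
      comp J J' L L' R (of fun j j' => ∑ i, (S i j)ᵀ * D i * S' i j') := by
  rw [transpose_comp, comp_mul_comp, comp_mul_comp]
  congr 1
  ext1 j j'
  refine sum_congr rfl fun i _ => ?_
  simp only [of_apply, map_apply, transpose_apply]
  rw [sum_eq_single i (fun i' _ h => by rw [diagonal_apply_ne _ h, Matrix.mul_zero]) (by simp),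
    diagonal_apply_eq]

end Matrix

variable {n m p R : Type*} [Fintype n] [CommRing R] {A X : Matrix n n R}

theorem Matrix.IsSymm.transpose_mul_mul_eq_of_mul_sub_eq_zero (hX : X.IsSymm)
    {u u' : Matrix n m R} {v v' : Matrix n p R}
    (hu : X * (u' - u) = 0) (hv : X * (v' - v) = 0) :
    u'ᵀ * X * v' = uᵀ * X * v := by
  have hu' : (u' - u)ᵀ * X = 0 := by rw [← hX.eq, ← transpose_mul, hu, transpose_zero]
  rw [← sub_eq_zero]
  calc u'ᵀ * X * v' - uᵀ * X * v = (u' - u)ᵀ * X * v' + uᵀ * (X * (v' - v)) := by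
        simp only [transpose_sub, Matrix.sub_mul, Matrix.mul_sub, Matrix.mul_assoc]; abel
    _ = 0 := by rw [hu', hv, Matrix.zero_mul, Matrix.mul_zero, add_zero]

theorem Matrix.IsSymm.sum_range_discreteLyapunov_add (hX : X.IsSymm) {u : ℕ → Matrix n m R}
    {v : ℕ → Matrix n p R} (hu : ∀ i, X * (u (i + 1) - A * u i) = 0)
    (hv : ∀ i, X * (v (i + 1) - A * v i) = 0) (r : ℕ) :
    ∑ i ∈ range r, (u i)ᵀ * (X - Aᵀ * X * A) * v i + (u r)ᵀ * X * v r = (u 0)ᵀ * X * v 0 := by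
  have telescope (i : ℕ) : (u i)ᵀ * (X - Aᵀ * X * A) * v i =
      (u i)ᵀ * X * v i - (u (i + 1))ᵀ * X * v (i + 1) := by
    rw [hX.transpose_mul_mul_eq_of_mul_sub_eq_zero (hu i) (hv i)]
    simp only [transpose_mul, Matrix.mul_sub, Matrix.sub_mul, Matrix.mul_assoc]
  rw [sum_congr rfl fun i _ => telescope i, sum_range_sub', sub_add_cancel]

variable [DecidableEq n]

def predictionBlock (A : Matrix n n R) (B : Matrix n m R) (i j : ℕ) : Matrix n m R :=
  if j ≤ i then A ^ (i - j) * B else 0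

theorem mul_predictionBlock_zero {B : Matrix n m R} (hXB : X * B = 0) (j : ℕ) :
    X * predictionBlock A B 0 j = 0 := by
  unfold predictionBlock
  split_ifs <;> simp [hXB]

theorem mul_predictionBlock_succ_sub {B : Matrix n m R} (hXB : X * B = 0) (i j : ℕ) :
    X * (predictionBlock A B (i + 1) j - A * predictionBlock A B i j) = 0 := by
  unfold predictionBlock
  split_ifs with h₁ h₂ h₂
  · rw [Nat.sub_add_comm h₂, pow_succ', Matrix.mul_assoc, sub_self, Matrix.mul_zero]
  · rw [show i + 1 - j = 0 by omega, pow_zero, Matrix.one_mul, Matrix.mul_zero, sub_zero, hXB]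
  · omega
  · simp

theorem Matrix.IsSymm.sum_range_transpose_predictionBlock_mul_mul {B : Matrix n m R}
    (hX : X.IsSymm) (hXB : X * B = 0) (r j l : ℕ) :
    ∑ i ∈ range (r + 1), (predictionBlock A B i j)ᵀ *
      (if i = r then X else X - Aᵀ * X * A) * predictionBlock A B i l = 0 := by
  rw [sum_range_succ, if_pos rfl, sum_congr rfl fun i hi => by rw [if_neg (mem_range.mp hi).ne],
    hX.sum_range_discreteLyapunov_add (u := (predictionBlock A B · j))
      (v := (predictionBlock A B · l)) (mul_predictionBlock_succ_sub hXB · j)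
      (mul_predictionBlock_succ_sub hXB · l),
    Matrix.mul_assoc, mul_predictionBlock_zero hXB, Matrix.mul_zero]

theorem stmt13_general {n m N : ℕ} (hN : 0 < N)
    (A : Matrix (Fin n) (Fin n) ℝ) (B : Matrix (Fin n) (Fin m) ℝ)
    (X : Matrix (Fin n) (Fin n) ℝ) (hX : X.IsSymm) (hXB : X * B = 0)
    (ΔP ΔQ : Matrix (Fin n) (Fin n) ℝ) (hP : ΔP = X) (hQ : ΔQ = X - Aᵀ * X * A) :
    let 𝒮 : Matrix (Fin N × Fin n) (Fin N × Fin m) ℝ :=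
      Matrix.of fun ia jb =>
        if (jb.1 : ℕ) ≤ (ia.1 : ℕ) then (A ^ ((ia.1 : ℕ) - (jb.1 : ℕ)) * B) ia.2 jb.2 else 0
    let 𝒯 : Matrix (Fin N × Fin n) (Fin n) ℝ :=
      Matrix.of fun ia b => (A ^ ((ia.1 : ℕ) + 1)) ia.2 b
    let Δ𝒬 : Matrix (Fin N × Fin n) (Fin N × Fin n) ℝ :=
      Matrix.of fun ia jb =>
        if ia.1 = jb.1 then (if (ia.1 : ℕ) = N - 1 then ΔP else ΔQ) ia.2 jb.2 else 0
    𝒯ᵀ * Δ𝒬 * 𝒮 = 0 → 𝒮ᵀ * Δ𝒬 * 𝒮 = 0 := by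
  intro 𝒮 𝒯 Δ𝒬 _
  subst ΔP ΔQ
  obtain ⟨r, rfl⟩ : ∃ r, N = r + 1 := Nat.exists_eq_add_one.mpr hN
  have h𝒮 : 𝒮 = comp _ _ _ _ _ (of fun i j : Fin (r + 1) => predictionBlock A B i j) := by
    ext ⟨i, a⟩ ⟨j, b⟩
    simp only [𝒮, predictionBlock, comp_apply, of_apply]
    split_ifs <;> rfl
  have hΔ𝒬 : Δ𝒬 = comp _ _ _ _ _
      (diagonal fun i : Fin (r + 1) => if (i : ℕ) = r then X else X - Aᵀ * X * A) := by
    ext ⟨i, a⟩ ⟨j, b⟩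
    simp only [Δ𝒬, comp_apply, diagonal_apply, add_tsub_cancel_right]
    split_ifs <;> simp_all
  rw [h𝒮, hΔ𝒬, comp_transpose_mul_comp_diagonal_mul_comp]
  ext ⟨j, b⟩ ⟨l, c⟩
  simp only [comp_apply, of_apply]
  rw [Fin.sum_univ_eq_sum_range (fun i => (predictionBlock A B i j)ᵀ *
      (if i = r then X else X - Aᵀ * X * A) * predictionBlock A B i l),
    hX.sum_range_transpose_predictionBlock_mul_mul hXB]
  rfl

theorem stmt13 {n m N : ℕ} (hN : 0 < N)
    (A : Matrix (Fin n) (Fin n) ℝ) (hA : IsUnit A) (B : Matrix (Fin n) (Fin m) ℝ)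
    (X : Matrix (Fin n) (Fin n) ℝ) (hX : X.IsSymm) (hXB : X * B = 0)
    (ΔP ΔQ : Matrix (Fin n) (Fin n) ℝ) (hP : ΔP = X) (hQ : ΔQ = X - Aᵀ * X * A) :
    let 𝒮 : Matrix (Fin N × Fin n) (Fin N × Fin m) ℝ :=
      Matrix.of fun ia jb =>
        if (jb.1 : ℕ) ≤ (ia.1 : ℕ) then (A ^ ((ia.1 : ℕ) - (jb.1 : ℕ)) * B) ia.2 jb.2 else 0
    let 𝒯 : Matrix (Fin N × Fin n) (Fin n) ℝ :=
      Matrix.of fun ia b => (A ^ ((ia.1 : ℕ) + 1)) ia.2 b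
    let Δ𝒬 : Matrix (Fin N × Fin n) (Fin N × Fin n) ℝ :=
      Matrix.of fun ia jb =>
        if ia.1 = jb.1 then (if (ia.1 : ℕ) = N - 1 then ΔP else ΔQ) ia.2 jb.2 else 0
    𝒯ᵀ * Δ𝒬 * 𝒮 = 0 → 𝒮ᵀ * Δ𝒬 * 𝒮 = 0 :=
  stmt13_general hN A B X hX hXB ΔP ΔQ hP hQ
end

section
/- Let F ∈ ℝ^{n×Nm} have full row rank n, 𝐑 ∈ ℝ^{Nm×Nm} be invertible, A ∈ ℝ^{n×n}, and suppose data matrices satisfy ΔF̃₁ = Ã·ΔF̃₀ + B̃·ΔZ̃* with Ã = 𝐑ᵀFᵀA(Fᵀ)†𝐑^{−⊤}, B̃ = 𝐑ᵀFᵀB̄𝐑, and a full-rank factorization ΔF̃₀ = ΔF_b·E₀ with ΔF_b ∈ ℝ^{Nm×n} of full column rank, E₀ ∈ ℝ^{n×(I−2)} of full row rank, where additionally 𝐑ᵀFᵀ = ΔF_b·T for some invertible T ∈ ℝ^{n×n} and ΔF̃₁ = ΔF_b·E₁. If there exists Θ ∈ ℝ^{(I−2)×n} with E₀Θ = I_n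 and ΔZ̃*Θ = 0, then E₁Θ = TAT^{−1}; in particular E₁Θ is similar to A and has the same eigenvalues. -/
open Matrix

/-!
Since `Rᵀ Fᵀ` has the left inverse `L = (F Fᵀ)⁻¹ F (Rᵀ)⁻¹`, the lifted system matrix is
`Ã = (Rᵀ Fᵀ) A L`, and `ΔF_b = Rᵀ Fᵀ T⁻¹` has the left inverse `T L`. Applying `T L` to the data
equation gives `E₁ = T A T⁻¹ E₀ + T B̄ R ΔZ̃*`, and `Θ` kills the second term while turning `E₀`
into the identity.
-/

namespace Matrix

theorem isUnit_of_rank_eq_card {K n : Type*} [Field K] [Fintype n] [DecidableEq n]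
    {A : Matrix n n K} (h : A.rank = Fintype.card n) : IsUnit A := by
  rw [← linearIndependent_cols_iff_isUnit, linearIndependent_iff_card_eq_finrank_span, ← h,
    rank_eq_finrank_span_cols]
  rfl

theorem isUnit_mul_transpose_of_rank_eq_card {K m n : Type*} [Field K] [LinearOrder K]
    [IsStrictOrderedRing K] [Fintype m] [DecidableEq m] [Fintype n] {F : Matrix m n K}
    (hF : F.rank = Fintype.card m) : IsUnit (F * Fᵀ) :=
  isUnit_of_rank_eq_card (by rw [rank_self_mul_transpose, hF])

end Matrix

theorem factor_eq_of_lifted_dynamics {K ι κ σ : Type*} [CommRing K] [Fintype ι] [DecidableEq ι]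
    [Fintype κ] {P : Matrix κ ι K} {L : Matrix ι κ K} {T A : Matrix ι ι K} {G : Matrix ι κ K}
    {ΔFb : Matrix κ ι K} {ΔF0 ΔF1 ΔZ : Matrix κ σ K} {E0 E1 : Matrix ι σ K}
    (hL : L * P = 1) (hT : IsUnit T) (hP : ΔFb * T = P)
    (hfac0 : ΔF0 = ΔFb * E0) (hfac1 : ΔF1 = ΔFb * E1)
    (hdata : ΔF1 = P * A * L * ΔF0 + P * G * ΔZ) :
    E1 = T * A * T⁻¹ * E0 + T * G * ΔZ := by
  have hTdet := (isUnit_iff_isUnit_det T).mp hT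
  have hΔFb : ΔFb = P * T⁻¹ := by rw [← hP, mul_nonsing_inv_cancel_right _ _ hTdet]
  have hLΔFb : L * ΔFb = T⁻¹ := by rw [hΔFb, ← Matrix.mul_assoc, hL, Matrix.one_mul]
  calc E1 = T * (L * ΔF1) := by
        rw [hfac1, ← Matrix.mul_assoc L, hLΔFb, mul_nonsing_inv_cancel_left _ _ hTdet]
    _ = T * A * T⁻¹ * E0 + T * G * ΔZ := by
        simp only [hdata, hfac0, Matrix.mul_add, ← Matrix.mul_assoc, hL, Matrix.mul_one]
        rw [Matrix.mul_assoc (T * A) L, hLΔFb]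

theorem stmt18_general {n m N s : ℕ}
    (A : Matrix (Fin n) (Fin n) ℝ)
    (F : Matrix (Fin n) (Fin N × Fin m) ℝ) (hF : F.rank = n)
    (R : Matrix (Fin N × Fin m) (Fin N × Fin m) ℝ) (hR : IsUnit R)
    (ΔF0 ΔF1 ΔZ : Matrix (Fin N × Fin m) (Fin s) ℝ)
    (ΔFb : Matrix (Fin N × Fin m) (Fin n) ℝ)
    (E0 E1 : Matrix (Fin n) (Fin s) ℝ)
    (T : Matrix (Fin n) (Fin n) ℝ) (hT : IsUnit T)
    (hfac0 : ΔF0 = ΔFb * E0)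
    (hRF : Rᵀ * Fᵀ = ΔFb * T)
    (hfac1 : ΔF1 = ΔFb * E1)
    (Bbar : Matrix (Fin n) (Fin N × Fin m) ℝ)
    (hdata : ΔF1 = (Rᵀ * Fᵀ * A * ((F * Fᵀ)⁻¹ * F) * (Rᵀ)⁻¹) * ΔF0
        + (Rᵀ * Fᵀ * Bbar * R) * ΔZ)
    (Θ : Matrix (Fin s) (Fin n) ℝ) (hΘ0 : E0 * Θ = 1) (hΘZ : ΔZ * Θ = 0) :
    E1 * Θ = T * A * T⁻¹ ∧ (E1 * Θ).charpoly = A.charpoly := by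
  have hFF : IsUnit (F * Fᵀ) := isUnit_mul_transpose_of_rank_eq_card (by rwa [Fintype.card_fin])
  have hRt : IsUnit (Rᵀ).det := by rwa [det_transpose, ← isUnit_iff_isUnit_det]
  have hL : (F * Fᵀ)⁻¹ * F * (Rᵀ)⁻¹ * (Rᵀ * Fᵀ) = 1 := by
    rw [Matrix.mul_assoc _ (Rᵀ)⁻¹, nonsing_inv_mul_cancel_left _ _ hRt, Matrix.mul_assoc,
      nonsing_inv_mul _ ((isUnit_iff_isUnit_det _).mp hFF)]
  have hE1 : E1 = T * A * T⁻¹ * E0 + T * (Bbar * R) * ΔZ :=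
    factor_eq_of_lifted_dynamics hL hT hRF.symm hfac0 hfac1
      (by rw [hdata]; simp only [Matrix.mul_assoc])
  have hE1Θ : E1 * Θ = T * A * T⁻¹ := by
    rw [hE1, Matrix.add_mul, Matrix.mul_assoc, hΘ0, Matrix.mul_assoc _ ΔZ, hΘZ, Matrix.mul_one,
      Matrix.mul_zero, add_zero]
  exact ⟨hE1Θ, hE1Θ ▸ charpoly_units_conj hT.unit A⟩

theorem stmt18 {n m N s : ℕ} (hN : 0 < N)
    (A : Matrix (Fin n) (Fin n) ℝ) (B : Matrix (Fin n) (Fin m) ℝ)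
    (F : Matrix (Fin n) (Fin N × Fin m) ℝ) (hF : F.rank = n)
    (R : Matrix (Fin N × Fin m) (Fin N × Fin m) ℝ) (hR : IsUnit R)
    (ΔF0 ΔF1 ΔZ : Matrix (Fin N × Fin m) (Fin s) ℝ)
    (ΔFb : Matrix (Fin N × Fin m) (Fin n) ℝ) (hΔFb : ΔFb.rank = n)
    (E0 E1 : Matrix (Fin n) (Fin s) ℝ) (hE0 : E0.rank = n)
    (T : Matrix (Fin n) (Fin n) ℝ) (hT : IsUnit T)
    (hfac0 : ΔF0 = ΔFb * E0)
    (hRF : Rᵀ * Fᵀ = ΔFb * T)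
    (hfac1 : ΔF1 = ΔFb * E1)
    (Bbar : Matrix (Fin n) (Fin N × Fin m) ℝ)
    (hBbar : Bbar = Matrix.of fun i jb => if (jb.1 : ℕ) = 0 then B i jb.2 else 0)
    (hdata : ΔF1 = (Rᵀ * Fᵀ * A * ((F * Fᵀ)⁻¹ * F) * (Rᵀ)⁻¹) * ΔF0
        + (Rᵀ * Fᵀ * Bbar * R) * ΔZ)
    (Θ : Matrix (Fin s) (Fin n) ℝ) (hΘ0 : E0 * Θ = 1) (hΘZ : ΔZ * Θ = 0) :
    E1 * Θ = T * A * T⁻¹ ∧ (E1 * Θ).charpoly = A.charpoly :=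
  stmt18_general A F hF R hR ΔF0 ΔF1 ΔZ ΔFb E0 E1 T hT hfac0 hRF hfac1 Bbar hdata Θ hΘ0 hΘZ
end
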